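/- Let Δ' ⊂ ℝ³ be the convex hull of the six points (−1,2,−1), (−1,−1,1), (−1,−1,−1), (6,−1,−1), (2,1,−1), (0,−1,1). Then Δ' contains the origin in its interior and its polar dual (Δ')* equals the convex hull of the six integer points (−1,−3,−4), (0,−2,−3), (0,1,0), (1,0,0), (0,0,1), (−1,−2,−3); in particular Δ' is a reflexive polytope. -/

import Mathlib

/-!
The polar dual of `convexHull ℝ V` is that of `V`, the intersection of the six half-spaces
`-1 ≤ ⟪y, v⟫`, `v ∈ V`; these are the facets of the claimed dual `W`. Writing `a, …, f` for the
listed points of `W` in order, `W` is the union of the simplices `abcd`, `acde`, `acef`, the cones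
from `a` over the facets not containing it. They share the edge `ac` and are separated by the
planes `acd` and `ace`, and their barycentric coordinates are positive multiples of facet
inequalities and of the equations of these two planes, so every point of the intersection of
half-spaces lies in one of them.
-/

open Filter Topology Matrix

section ConvexCombination

variable {E : Type*} [AddCommGroup E] [Module ℝ E]

theorem mem_convexHull_of_eq_convexCombination₄ {s : Set E} {p q r t x : E}
    (hp : p ∈ s) (hq : q ∈ s) (hr : r ∈ s) (ht : t ∈ s) {a b c d : ℝ}
    (ha : 0 ≤ a) (hb : 0 ≤ b) (hc : 0 ≤ c) (hd : 0 ≤ d) (habcd : a + b + c + d = 1)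
    (hx : x = a • p + b • q + c • r + d • t) : x ∈ convexHull ℝ s := by
  have hmem := (convex_convexHull ℝ s).sum_mem (t := Finset.univ) (w := ![a, b, c, d])
    (z := ![p, q, r, t]) (by simp [Fin.forall_fin_succ, ha, hb, hc, hd])
    (by simpa [Fin.sum_univ_four] using habcd)
    (fun i _ => subset_convexHull ℝ s (by fin_cases i <;> assumption))
  simpa [Fin.sum_univ_four, hx] using hmem

end ConvexCombination

section PolarDual

variable {ι : Type*} [Fintype ι]

def polarDual (s : Set (ι → ℝ)) : Set (ι → ℝ) :=
  {y | ∀ x ∈ s, -1 ≤ y ⬝ᵥ x}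

theorem convex_polarDual (s : Set (ι → ℝ)) : Convex ℝ (polarDual s) := by
  simp only [polarDual, Set.ofPred_forall]
  exact convex_iInter₂ fun x _ => convex_halfSpace_ge
    ⟨fun u v => add_dotProduct u v x, fun c y => smul_dotProduct c y x⟩ (-1)

theorem polarDual_convexHull (s : Set (ι → ℝ)) : polarDual (convexHull ℝ s) = polarDual s :=
  subset_antisymm (fun _ hy x hx => hy x (subset_convexHull ℝ s hx)) fun y hy =>
    convexHull_min hy <| convex_halfSpace_ge ⟨dotProduct_add y, fun c x => dotProduct_smul c y x⟩ (-1)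

end PolarDual

def deltaVertices : Set (Fin 3 → ℝ) :=
  {![-1,2,-1], ![-1,-1,1], ![-1,-1,-1], ![6,-1,-1], ![2,1,-1], ![0,-1,1]}

def dualVertices : Set (Fin 3 → ℝ) :=
  {![-1,-3,-4], ![0,-2,-3], ![0,1,0], ![1,0,0], ![0,0,1], ![-1,-2,-3]}

theorem zero_mem_interior_convexHull_deltaVertices :
    (0 : Fin 3 → ℝ) ∈ interior (convexHull ℝ deltaVertices) := by
  have hpos (f : (Fin 3 → ℝ) → ℝ) (hf : Continuous f) (h0 : 0 < f 0) : ∀ᶠ x in 𝓝 0, 0 < f x :=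
    hf.continuousAt.eventually_const_lt h0
  rw [mem_interior_iff_mem_nhds]
  -- barycentric coordinates w.r.t. the simplex on the first four vertices, all positive at `0`
  filter_upwards [hpos (fun x => (x 1 + 1) / 3) (by fun_prop) (by norm_num),
    hpos (fun x => (x 2 + 1) / 2) (by fun_prop) (by norm_num),
    hpos (fun x => (1 - 6 * x 0 - 14 * x 1 - 21 * x 2) / 42) (by fun_prop) (by norm_num),
    hpos (fun x => (x 0 + 1) / 7) (by fun_prop) (by norm_num)] with x h₁ h₂ h₃ h₄
  refine mem_convexHull_of_eq_convexCombination₄ (p := ![-1,2,-1]) (q := ![-1,-1,1])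
    (r := ![-1,-1,-1]) (t := ![6,-1,-1]) (by simp [deltaVertices]) (by simp [deltaVertices])
    (by simp [deltaVertices]) (by simp [deltaVertices]) h₁.le h₂.le h₃.le h₄.le (by ring) ?_
  ext i; fin_cases i <;> simp <;> ring

theorem dualVertices_subset_polarDual : dualVertices ⊆ polarDual deltaVertices := by
  norm_num [dualVertices, deltaVertices, polarDual, Set.insert_subset_iff, dotProduct,
    Fin.sum_univ_three, cons_val_two, tail_cons, head_cons]

theorem polarDual_deltaVertices_subset : polarDual deltaVertices ⊆ convexHull ℝ dualVertices := by
  intro y hy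
  simp only [polarDual, deltaVertices, Set.mem_insert_iff, Set.mem_singleton_iff,
    forall_eq_or_imp, forall_eq, Set.mem_ofPred_eq, dotProduct, Fin.sum_univ_three,
    cons_val_zero, cons_val_one, cons_val] at hy
  obtain ⟨h₁, h₂, h₃, h₄, h₅, h₆⟩ := hy
  have ha : ![-1,-3,-4] ∈ dualVertices := by simp [dualVertices]
  have hb : ![0,-2,-3] ∈ dualVertices := by simp [dualVertices]
  have hc : ![0,1,0] ∈ dualVertices := by simp [dualVertices]
  have hd : ![1,0,0] ∈ dualVertices := by simp [dualVertices]
  have he : ![0,0,1] ∈ dualVertices := by simp [dualVertices]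
  have hf : ![-1,-2,-3] ∈ dualVertices := by simp [dualVertices]
  -- sides of the planes `acd` and `ace`
  rcases le_total 4 (4 * y 0 + 4 * y 1 - 5 * y 2) with hacd | hacd
  · refine mem_convexHull_of_eq_convexCombination₄ ha hb hc hd
      (a := 1 - y 0 - y 1 + y 2) (b := (4 * y 0 + 4 * y 1 - 5 * y 2 - 4) / 3)
      (c := (1 - y 0 + 2 * y 1 - y 2) / 3) (d := 1 - y 1 + y 2)
      (by linarith) (by linarith) (by linarith) (by linarith) (by ring) ?_
    ext i; fin_cases i <;> simp <;> ring
  rcases le_total (-1) (8 * y 0 - y 1 - y 2) with hace | hace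
  · refine mem_convexHull_of_eq_convexCombination₄ ha hc hd he
      (a := (1 - y 0 - y 1 - y 2) / 9) (b := (1 - y 0 + 2 * y 1 - y 2) / 3)
      (c := (1 + 8 * y 0 - y 1 - y 2) / 9) (d := (4 - 4 * y 0 - 4 * y 1 + 5 * y 2) / 9)
      (by linarith) (by linarith) (by linarith) (by linarith) (by ring) ?_
    ext i; fin_cases i <;> simp <;> ring
  · refine mem_convexHull_of_eq_convexCombination₄ ha hc he hf
      (a := (1 + 6 * y 0 - y 1 - y 2) / 2) (b := (1 + 2 * y 0 + y 1 - y 2) / 2)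
      (c := (1 - y 1 + y 2) / 2) (d := (-1 - 8 * y 0 + y 1 + y 2) / 2)
      (by linarith) (by linarith) (by linarith) (by linarith) (by ring) ?_
    ext i; fin_cases i <;> simp <;> ring

/-- The polytope Δ' contains the origin in its interior and its polar dual
is the convex hull of the listed integer points; in particular Δ' is reflexive. -/
theorem stmt_10 :
    let Δ' : Set (Fin 3 → ℝ) := convexHull ℝ ({![-1,2,-1], ![-1,-1,1], ![-1,-1,-1], ![6,-1,-1], ![2,1,-1], ![0,-1,1]} : Set (Fin 3 → ℝ))
    (0 : Fin 3 → ℝ) ∈ interior Δ' ∧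
    {y : Fin 3 → ℝ | ∀ x ∈ Δ', -1 ≤ ∑ i, y i * x i} =
      convexHull ℝ ({![-1,-3,-4], ![0,-2,-3], ![0,1,0], ![1,0,0], ![0,0,1], ![-1,-2,-3]} : Set (Fin 3 → ℝ)) := by
  refine ⟨zero_mem_interior_convexHull_deltaVertices, ?_⟩
  change polarDual (convexHull ℝ deltaVertices) = convexHull ℝ dualVertices
  rw [polarDual_convexHull]
  exact subset_antisymm polarDual_deltaVertices_subset
    (convexHull_min dualVertices_subset_polarDual (convex_polarDual _))
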